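/- arXiv:1409.3430 — 5 statements merged into one kernel-verified Lean document; each statement's English description precedes it below -/
import Mathlib

section
/- Let H be a real linear subspace of the space of functions from ℝ^n to ℝ that contains all constant functions, and let Λ : H → ℝ be a sublinear expectation on H. Then for every f₀ ∈ H there exists a linear functional M : H → ℝ such that M[f] ≤ Λ[f] for all f ∈ H and M[f₀] = Λ[f₀]; consequently Λ[f] = max{ M[f] : M : H → ℝ linear with M ≤ Λ on H } for every f ∈ H. -/
open scoped Real

/-- A sublinear expectation on a linear subspace `H` of functions `ℝ^n → ℝ`
containing all constants is the maximum of the linear functionals it dominates. -/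
theorem sublinear_expectation_representation_pointwise
    (n : ℕ) (H : Submodule ℝ ((EuclideanSpace ℝ (Fin n)) → ℝ))
    (hconst : ∀ c : ℝ, (fun _ => c) ∈ H)
    (Λ : H → ℝ)
    (hmono : ∀ f g : H, (∀ x, (g : (EuclideanSpace ℝ (Fin n)) → ℝ) x ≤ (f : (EuclideanSpace ℝ (Fin n)) → ℝ) x) → Λ g ≤ Λ f)
    (hconstpres : ∀ c : ℝ, Λ ⟨fun _ => c, hconst c⟩ = c)
    (hsubadd : ∀ f g : H, Λ (f + g) ≤ Λ f + Λ g)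
    (hposhom : ∀ (a : ℝ), 0 ≤ a → ∀ f : H, Λ (a • f) = a * Λ f) :
    ∀ f₀ : H,
      (∃ M : H →ₗ[ℝ] ℝ, (∀ f : H, M f ≤ Λ f) ∧ M f₀ = Λ f₀) ∧
      IsGreatest {r : ℝ | ∃ M : H →ₗ[ℝ] ℝ, (∀ f : H, M f ≤ Λ f) ∧ M f₀ = r} (Λ f₀) := by
  intro f₀
  have hΛ0 : Λ 0 = 0 := by
    have := hposhom 0 le_rfl 0
    simpa using this
  -- Λ is positively homogeneous in the sense needed
  have N_hom : ∀ c : ℝ, 0 < c → ∀ x : H, Λ (c • x) = c * Λ x := fun c hc x =>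
    hposhom c hc.le x
  -- key inequality for negative scalars
  have hneg : ∀ c : ℝ, c * Λ f₀ ≤ Λ (c • f₀) := by
    intro c
    rcases le_or_gt 0 c with hc | hc
    · rw [hposhom c hc]
    · have h1 : Λ (c • f₀ + (-c) • f₀) ≤ Λ (c • f₀) + Λ ((-c) • f₀) := hsubadd _ _
      have h2 : c • f₀ + (-c) • f₀ = 0 := by
        rw [← add_smul]; simp
      rw [h2, hΛ0, hposhom (-c) (by linarith)] at h1
      nlinarith
  -- build the partial linear map on span {f₀}
  have hH : ∀ a : ℝ, a • f₀ = 0 → a • Λ f₀ = 0 := by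
    intro a ha
    by_cases h0 : f₀ = 0
    · rw [h0, hΛ0, smul_zero]
    · rcases smul_eq_zero.1 ha with h | h
      · rw [h, zero_smul]
      · exact absurd h h0
  set p : H →ₗ.[ℝ] ℝ := LinearPMap.mkSpanSingleton' f₀ (Λ f₀) hH with hp
  have hdom : p.domain = Submodule.span ℝ {f₀} := LinearPMap.domain_mkSpanSingleton f₀ (Λ f₀) hH
  have hf : ∀ x : p.domain, p x ≤ Λ x := by
    rintro ⟨x, hx⟩
    rw [hdom] at hx
    rcases Submodule.mem_span_singleton.1 hx with ⟨c, rfl⟩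
    have : p ⟨c • f₀, by rw [hdom]; exact Submodule.smul_mem _ c (Submodule.mem_span_singleton_self f₀)⟩ = c • Λ f₀ :=
      LinearPMap.mkSpanSingleton'_apply f₀ (Λ f₀) hH c _
    rw [this]
    exact hneg c
  obtain ⟨M, hM1, hM2⟩ := exists_extension_of_le_sublinear p Λ N_hom hsubadd hf
  have hMf₀ : M f₀ = Λ f₀ := by
    have hmem : f₀ ∈ p.domain := by rw [hdom]; exact Submodule.mem_span_singleton_self f₀
    have := hM1 ⟨f₀, hmem⟩
    rw [this]
    exact LinearPMap.mkSpanSingleton'_apply_self f₀ (Λ f₀) hH hmem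
  refine ⟨⟨M, hM2, hMf₀⟩, ⟨M, hM2, hMf₀⟩, ?_⟩
  rintro r ⟨M', hM', rfl⟩
  exact hM' f₀
end

section
/- Let p ≥ 1 be an integer and let Λ : C_{2p,Lip}(ℝ^n) → ℝ be a sublinear expectation. Then for every sequence (f_i) of functions in C_{2p−1,Lip}(ℝ^n) that decreases pointwise to 0 on ℝ^n, one has Λ[f_i] ↓ 0. -/
open Filter Topology

/-- The space `C_{q,Lip}(ℝ^n)` of locally Lipschitz functions with polynomial growth of
order `q`. -/
def CLip (q n : ℕ) : Set ((EuclideanSpace ℝ (Fin n)) → ℝ) :=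
  {f | ∃ K : ℝ, ∀ x x' : EuclideanSpace ℝ (Fin n),
    |f x - f x'| ≤ K * (1 + ‖x‖ ^ (q - 1) + ‖x'‖ ^ (q - 1)) * ‖x - x'‖}

/-- `x^a ≤ 1 + x^b` for `0 ≤ x` and `a ≤ b`. -/
lemma aux_pow_le_one_add_pow {x : ℝ} (hx : 0 ≤ x) {a b : ℕ} (h : a ≤ b) :
    x ^ a ≤ 1 + x ^ b := by
  rcases le_total x 1 with h1 | h1
  · have h2 : x ^ a ≤ 1 := pow_le_one₀ hx h1
    have h3 : 0 ≤ x ^ b := pow_nonneg hx b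
    linarith
  · have h2 : x ^ a ≤ x ^ b := pow_le_pow_right₀ h1 h
    have h3 : 0 ≤ x ^ a := pow_nonneg hx a
    linarith

/-- `a^m - b^m ≤ m * a^(m-1) * (a-b)` for `0 ≤ b ≤ a`. -/
lemma aux_pow_sub_pow_le {a b : ℝ} (hb : 0 ≤ b) (h : b ≤ a) (m : ℕ) :
    a ^ m - b ^ m ≤ m * a ^ (m - 1) * (a - b) := by
  have ha : 0 ≤ a := hb.trans h
  rw [← geom_sum₂_mul a b m]
  have hsum : (∑ i ∈ Finset.range m, a ^ i * b ^ (m - 1 - i)) ≤ m * a ^ (m - 1) := by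
    calc (∑ i ∈ Finset.range m, a ^ i * b ^ (m - 1 - i))
        ≤ ∑ i ∈ Finset.range m, a ^ (m - 1) := by
          apply Finset.sum_le_sum
          intro i hi
          have hi' : i < m := Finset.mem_range.mp hi
          calc a ^ i * b ^ (m - 1 - i) ≤ a ^ i * a ^ (m - 1 - i) := by
                apply mul_le_mul_of_nonneg_left (pow_le_pow_left₀ hb h _) (pow_nonneg ha _)
            _ = a ^ (m - 1) := by rw [← pow_add]; congr 1; omega
      _ = m * a ^ (m - 1) := by
          rw [Finset.sum_const, Finset.card_range, nsmul_eq_mul]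
  exact mul_le_mul_of_nonneg_right hsum (sub_nonneg.2 h)

/-- `|a^m - b^m| ≤ m * (a^(m-1) + b^(m-1)) * |a - b|` for nonnegative `a, b`. -/
lemma aux_abs_pow_sub_pow (a b : ℝ) (ha : 0 ≤ a) (hb : 0 ≤ b) (m : ℕ) :
    |a ^ m - b ^ m| ≤ m * (a ^ (m - 1) + b ^ (m - 1)) * |a - b| := by
  have key : ∀ u v : ℝ, 0 ≤ v → v ≤ u →
      |u ^ m - v ^ m| ≤ m * (u ^ (m - 1) + v ^ (m - 1)) * |u - v| := by
    intro u v hv huv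
    have h1 : v ^ m ≤ u ^ m := pow_le_pow_left₀ hv huv m
    rw [abs_of_nonneg (sub_nonneg.2 h1), abs_of_nonneg (sub_nonneg.2 huv)]
    have h2 := aux_pow_sub_pow_le hv huv m
    have h3 : (m : ℝ) * u ^ (m - 1) * (u - v) ≤ m * (u ^ (m-1) + v ^ (m-1)) * (u - v) := by
      apply mul_le_mul_of_nonneg_right _ (sub_nonneg.2 huv)
      have h4 : (0:ℝ) ≤ v ^ (m - 1) := pow_nonneg hv (m - 1)
      have h5 : (0:ℝ) ≤ (m:ℝ) := Nat.cast_nonneg m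
      nlinarith
    linarith
  rcases le_total b a with h | h
  · exact key a b hb h
  · rw [abs_sub_comm, abs_sub_comm a b]
    have := key b a ha h
    linarith [this]

/-- Constants belong to `CLip`. -/
lemma clip_const (q n : ℕ) (c : ℝ) : (fun _ => c) ∈ CLip q n := by
  refine ⟨0, fun x x' => ?_⟩
  simp

/-- `CLip` is closed under addition. -/
lemma clip_add {q n : ℕ} {f g : (EuclideanSpace ℝ (Fin n)) → ℝ}
    (hf : f ∈ CLip q n) (hg : g ∈ CLip q n) : f + g ∈ CLip q n := by
  obtain ⟨K1, h1⟩ := hf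
  obtain ⟨K2, h2⟩ := hg
  refine ⟨K1 + K2, fun x x' => ?_⟩
  have hb1 := h1 x x'
  have hb2 := h2 x x'
  have habs : |(f + g) x - (f + g) x'| ≤ |f x - f x'| + |g x - g x'| := by
    simp only [Pi.add_apply]
    calc |f x + g x - (f x' + g x')| = |(f x - f x') + (g x - g x')| := by ring_nf
      _ ≤ _ := abs_add_le _ _
  calc |(f + g) x - (f + g) x'| ≤ |f x - f x'| + |g x - g x'| := habs
    _ ≤ K1 * (1 + ‖x‖ ^ (q-1) + ‖x'‖ ^ (q-1)) * ‖x - x'‖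
        + K2 * (1 + ‖x‖ ^ (q-1) + ‖x'‖ ^ (q-1)) * ‖x - x'‖ := by linarith
    _ = (K1 + K2) * (1 + ‖x‖ ^ (q-1) + ‖x'‖ ^ (q-1)) * ‖x - x'‖ := by ring

/-- `CLip` is closed under scalar multiplication. -/
lemma clip_smul {q n : ℕ} {f : (EuclideanSpace ℝ (Fin n)) → ℝ}
    (hf : f ∈ CLip q n) (a : ℝ) : a • f ∈ CLip q n := by
  obtain ⟨K, hK⟩ := hf
  refine ⟨|a| * K, fun x x' => ?_⟩
  have hb := hK x x'
  have h1 : |(a • f) x - (a • f) x'| = |a| * |f x - f x'| := by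
    simp only [Pi.smul_apply, smul_eq_mul]
    rw [← abs_mul]; ring_nf
  rw [h1]
  calc |a| * |f x - f x'| ≤ |a| * (K * (1 + ‖x‖ ^ (q-1) + ‖x'‖ ^ (q-1)) * ‖x - x'‖) :=
        mul_le_mul_of_nonneg_left hb (abs_nonneg a)
    _ = |a| * K * (1 + ‖x‖ ^ (q-1) + ‖x'‖ ^ (q-1)) * ‖x - x'‖ := by ring

/-- Inclusion `CLip q ⊆ CLip q'` when `q - 1 ≤ q' - 1`. -/
lemma clip_incl {q q' n : ℕ} (h : q - 1 ≤ q' - 1) {f : (EuclideanSpace ℝ (Fin n)) → ℝ}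
    (hf : f ∈ CLip q n) : f ∈ CLip q' n := by
  obtain ⟨K, hK⟩ := hf
  refine ⟨3 * max K 0, fun x x' => ?_⟩
  have hb := hK x x'
  have hs : ‖x‖ ^ (q-1) ≤ 1 + ‖x‖ ^ (q'-1) := aux_pow_le_one_add_pow (norm_nonneg x) h
  have ht : ‖x'‖ ^ (q-1) ≤ 1 + ‖x'‖ ^ (q'-1) := aux_pow_le_one_add_pow (norm_nonneg x') h
  have hd : (0:ℝ) ≤ ‖x - x'‖ := norm_nonneg _
  have hA : (0:ℝ) ≤ 1 + ‖x‖ ^ (q-1) + ‖x'‖ ^ (q-1) := by positivity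
  have hs' : (0:ℝ) ≤ ‖x‖ ^ (q'-1) := by positivity
  have ht' : (0:ℝ) ≤ ‖x'‖ ^ (q'-1) := by positivity
  have hM : K ≤ max K 0 := le_max_left K 0
  have hM0 : (0:ℝ) ≤ max K 0 := le_max_right K 0
  calc |f x - f x'| ≤ K * (1 + ‖x‖ ^ (q-1) + ‖x'‖ ^ (q-1)) * ‖x - x'‖ := hb
    _ ≤ max K 0 * (1 + ‖x‖ ^ (q-1) + ‖x'‖ ^ (q-1)) * ‖x - x'‖ := by
        apply mul_le_mul_of_nonneg_right _ hd
        exact mul_le_mul_of_nonneg_right hM hA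
    _ ≤ 3 * max K 0 * (1 + ‖x‖ ^ (q'-1) + ‖x'‖ ^ (q'-1)) * ‖x - x'‖ := by
        apply mul_le_mul_of_nonneg_right _ hd
        nlinarith

/-- Functions in `CLip` are continuous. -/
lemma clip_continuous {q n : ℕ} {f : (EuclideanSpace ℝ (Fin n)) → ℝ}
    (hf : f ∈ CLip q n) : Continuous f := by
  obtain ⟨K, hK⟩ := hf
  rw [continuous_iff_continuousAt]
  intro x0
  rw [ContinuousAt, tendsto_iff_dist_tendsto_zero]
  apply squeeze_zero (fun x => dist_nonneg)
    (g := fun x => max K 0 * (1 + ‖x‖ ^ (q-1) + ‖x0‖ ^ (q-1)) * ‖x - x0‖)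
  · intro x
    rw [Real.dist_eq]
    calc |f x - f x0| ≤ K * (1 + ‖x‖ ^ (q-1) + ‖x0‖ ^ (q-1)) * ‖x - x0‖ := hK x x0
      _ ≤ max K 0 * (1 + ‖x‖ ^ (q-1) + ‖x0‖ ^ (q-1)) * ‖x - x0‖ := by
          apply mul_le_mul_of_nonneg_right _ (norm_nonneg _)
          apply mul_le_mul_of_nonneg_right (le_max_left K 0)
          positivity
  · have hcont : Continuous (fun x : EuclideanSpace ℝ (Fin n) =>
        max K 0 * (1 + ‖x‖ ^ (q-1) + ‖x0‖ ^ (q-1)) * ‖x - x0‖) := by fun_prop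
    have := hcont.tendsto x0
    simpa using this

/-- Dini-type result: an antitone sequence of continuous functions tending pointwise to `0`
is eventually uniformly small on a compact set. -/
lemma aux_dini {n : ℕ} (f : ℕ → (EuclideanSpace ℝ (Fin n)) → ℝ)
    (hc : ∀ i, Continuous (f i)) (hanti : ∀ x, Antitone (fun i => f i x))
    (hlim : ∀ x, Tendsto (fun i => f i x) atTop (𝓝 0))
    {K : Set (EuclideanSpace ℝ (Fin n))} (hK : IsCompact K) {ε : ℝ} (hε : 0 < ε) :
    ∃ N, ∀ x ∈ K, f N x < ε := by
  have hex : ∀ x : EuclideanSpace ℝ (Fin n), ∃ i, f i x < ε := fun x =>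
    ((hlim x).eventually (gt_mem_nhds hε)).exists
  choose idx hidx using hex
  obtain ⟨t, ht⟩ := hK.elim_nhds_subcover (fun x => {y | f (idx x) y < ε}) (fun x _ =>
    IsOpen.mem_nhds (isOpen_lt (hc _) continuous_const) (hidx x))
  refine ⟨t.sup idx, fun y hy => ?_⟩
  obtain ⟨x, hx, hyx⟩ := Set.mem_iUnion₂.mp (ht.2 hy)
  exact lt_of_le_of_lt (hanti y (Finset.le_sup hx)) hyx

/-- a sublinear expectation on `C_{2p,Lip}(ℝ^n)` is continuous from above at `0`
along sequences in `C_{2p-1,Lip}(ℝ^n)`: if `f_i ∈ C_{2p-1,Lip}(ℝ^n)` decrease pointwise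
to `0`, then `Λ[f_i] ↓ 0`. -/
theorem sublinear_expectation_downward_continuity
    (n p : ℕ) (hp : 1 ≤ p)
    (Λ : ((EuclideanSpace ℝ (Fin n)) → ℝ) → ℝ)
    (hmono : ∀ f ∈ CLip (2 * p) n, ∀ g ∈ CLip (2 * p) n, (∀ x, g x ≤ f x) → Λ g ≤ Λ f)
    (hconstpres : ∀ c : ℝ, Λ (fun _ => c) = c)
    (hsubadd : ∀ f ∈ CLip (2 * p) n, ∀ g ∈ CLip (2 * p) n, Λ (f + g) ≤ Λ f + Λ g)
    (hposhom : ∀ f ∈ CLip (2 * p) n, ∀ a : ℝ, 0 ≤ a → Λ (a • f) = a * Λ f)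
    (f : ℕ → ((EuclideanSpace ℝ (Fin n)) → ℝ))
    (hf : ∀ i, f i ∈ CLip (2 * p - 1) n)
    (hanti : ∀ x, Antitone (fun i => f i x))
    (hlim : ∀ x, Tendsto (fun i => f i x) atTop (𝓝 0)) :
    Antitone (fun i => Λ (f i)) ∧ Tendsto (fun i => Λ (f i)) atTop (𝓝 0) := by
  -- Inclusion into CLip (2p)
  have hincl : (2 * p - 1) - 1 ≤ 2 * p - 1 := by omega
  have hf2p : ∀ i, f i ∈ CLip (2 * p) n := fun i => clip_incl hincl (hf i)
  -- nonnegativity of the f i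
  have hfnn : ∀ i x, 0 ≤ f i x := by
    intro i x
    refine le_of_tendsto (hlim x) ?_
    filter_upwards [eventually_ge_atTop i] with j hj
    exact hanti x hj
  -- antitonicity of Λ (f i)
  have hA : Antitone (fun i => Λ (f i)) := fun i j hij =>
    hmono (f i) (hf2p i) (f j) (hf2p j) (fun x => hanti x hij)
  -- nonnegativity of Λ (f i)
  have hΛnn : ∀ i, 0 ≤ Λ (f i) := by
    intro i
    have h0 := hmono (f i) (hf2p i) (fun _ => (0:ℝ)) (clip_const _ _ 0) (fun x => hfnn i x)
    rwa [hconstpres 0] at h0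
  -- growth bound for f 0
  obtain ⟨K, hK⟩ := hf 0
  obtain ⟨M, hMdef⟩ : ∃ M : ℝ, M = max K 0 := ⟨_, rfl⟩
  have hM0 : (0:ℝ) ≤ M := hMdef ▸ le_max_right K 0
  have hMK : K ≤ M := hMdef ▸ le_max_left K 0
  obtain ⟨C, hCdef⟩ : ∃ C : ℝ, C = |f 0 0| + 3 * M + 1 := ⟨_, rfl⟩
  have hC : 0 < C := by rw [hCdef]; positivity
  have hgrow : ∀ x, f 0 x ≤ C * (1 + ‖x‖ ^ (2 * p - 1)) := by
    intro x
    have hb := hK x 0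
    have hxnn : (0:ℝ) ≤ ‖x‖ := norm_nonneg x
    have hxe : (0:ℝ) ≤ ‖x‖ ^ (2 * p - 1 - 1) := by positivity
    have hz : ‖(0 : EuclideanSpace ℝ (Fin n))‖ ^ (2 * p - 1 - 1) ≤ 1 := by
      rw [norm_zero]
      rcases Nat.eq_zero_or_pos (2 * p - 1 - 1) with he | he
      · rw [he]; norm_num
      · rw [zero_pow (by omega)]; norm_num
    have hz0 : (0:ℝ) ≤ ‖(0 : EuclideanSpace ℝ (Fin n))‖ ^ (2 * p - 1 - 1) := by positivity
    rw [sub_zero] at hb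
    have hb2 : |f 0 x - f 0 0| ≤ M * (2 + ‖x‖ ^ (2 * p - 1 - 1)) * ‖x‖ := by
      refine le_trans hb (mul_le_mul_of_nonneg_right ?_ hxnn)
      have h1 : K * (1 + ‖x‖ ^ (2*p-1-1) + ‖(0:EuclideanSpace ℝ (Fin n))‖ ^ (2*p-1-1))
          ≤ M * (1 + ‖x‖ ^ (2*p-1-1) + ‖(0:EuclideanSpace ℝ (Fin n))‖ ^ (2*p-1-1)) := by
        apply mul_le_mul_of_nonneg_right hMK
        linarith
      have h2 : M * (1 + ‖x‖ ^ (2*p-1-1) + ‖(0:EuclideanSpace ℝ (Fin n))‖ ^ (2*p-1-1))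
          ≤ M * (2 + ‖x‖ ^ (2*p-1-1)) := by
        apply mul_le_mul_of_nonneg_left _ hM0
        linarith
      linarith
    have hcomb : ‖x‖ ^ (2 * p - 1 - 1) * ‖x‖ = ‖x‖ ^ (2 * p - 1) := by
      rw [← pow_succ]; congr 1; omega
    have hx1 : ‖x‖ ≤ 1 + ‖x‖ ^ (2 * p - 1) := by
      have := aux_pow_le_one_add_pow hxnn (a := 1) (b := 2 * p - 1) (by omega)
      simpa using this
    have he : (0:ℝ) ≤ ‖x‖ ^ (2 * p - 1) := by positivity
    have habs : f 0 x ≤ |f 0 0| + |f 0 x - f 0 0| := by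
      have h1 := le_abs_self (f 0 x - f 0 0)
      have h2 := le_abs_self (f 0 0)
      linarith
    have hstep : M * (2 + ‖x‖ ^ (2*p-1-1)) * ‖x‖ = 2 * M * ‖x‖ + M * ‖x‖ ^ (2*p-1) := by
      rw [← hcomb]; ring
    have hfin : f 0 x ≤ |f 0 0| + 2 * M * ‖x‖ + M * ‖x‖ ^ (2*p-1) := by
      rw [hstep] at hb2; linarith
    have h00 : (0:ℝ) ≤ |f 0 0| := abs_nonneg _
    have hmul : 2 * M * ‖x‖ ≤ 2 * M * (1 + ‖x‖ ^ (2*p-1)) :=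
      mul_le_mul_of_nonneg_left hx1 (by positivity)
    have h00s : (0:ℝ) ≤ |f 0 0| * ‖x‖ ^ (2*p-1) := mul_nonneg h00 he
    rw [hCdef]
    linarith
  -- the dominating function h
  obtain ⟨h, hhdef⟩ : ∃ h : (EuclideanSpace ℝ (Fin n)) → ℝ,
      h = fun x => 1 + ‖x‖ ^ (2 * p) := ⟨_, rfl⟩
  have hhx : ∀ x, h x = 1 + ‖x‖ ^ (2 * p) := fun x => by rw [hhdef]
  have hh : h ∈ CLip (2 * p) n := by
    refine ⟨(2 * p : ℕ), fun x x' => ?_⟩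
    have key := aux_abs_pow_sub_pow ‖x‖ ‖x'‖ (norm_nonneg x) (norm_nonneg x') (2 * p)
    have hnn : |‖x‖ - ‖x'‖| ≤ ‖x - x'‖ := abs_norm_sub_norm_le x x'
    have h1 : h x - h x' = ‖x‖ ^ (2*p) - ‖x'‖ ^ (2*p) := by rw [hhx, hhx]; ring
    rw [h1]
    have hp0 : (0:ℝ) ≤ ((2*p : ℕ) : ℝ) := Nat.cast_nonneg _
    calc |‖x‖ ^ (2*p) - ‖x'‖ ^ (2*p)|
        ≤ ((2*p : ℕ) : ℝ) * (‖x‖ ^ (2*p-1) + ‖x'‖ ^ (2*p-1)) * |‖x‖ - ‖x'‖| := key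
      _ ≤ ((2*p : ℕ) : ℝ) * (1 + ‖x‖ ^ (2*p-1) + ‖x'‖ ^ (2*p-1)) * ‖x - x'‖ := by
          apply mul_le_mul
          · apply mul_le_mul_of_nonneg_left _ hp0
            linarith
          · exact hnn
          · exact abs_nonneg _
          · positivity
  have hh1 : ∀ x, (1:ℝ) ≤ h x := by
    intro x
    have hxp : (0:ℝ) ≤ ‖x‖ ^ (2*p) := by positivity
    rw [hhx]; linarith
  obtain ⟨L, hLdef⟩ : ∃ L : ℝ, L = Λ h := ⟨_, rfl⟩
  have hL1 : (1:ℝ) ≤ L := by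
    have := hmono h hh (fun _ => (1:ℝ)) (clip_const _ _ 1) hh1
    rw [hconstpres 1] at this
    rw [hLdef]; exact this
  have hL0 : (0:ℝ) < L := by linarith
  -- The key step: ∀ ε > 0, ∃ N, Λ (f N) < ε
  have key : ∀ ε : ℝ, 0 < ε → ∃ N, Λ (f N) < ε := by
    intro ε hε
    obtain ⟨r, hrdef⟩ : ∃ r : ℝ, r = max 1 (8 * C * L / ε) := ⟨_, rfl⟩
    have hr1 : (1:ℝ) ≤ r := hrdef ▸ le_max_left _ _
    have hr0 : (0:ℝ) < r := by linarith
    have hr2 : 8 * C * L / ε ≤ r := hrdef ▸ le_max_right _ _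
    have hr3 : 8 * C * L ≤ ε * r := by
      rw [div_le_iff₀ hε] at hr2; linarith
    -- Dini on the closed ball of radius r
    obtain ⟨N, hN⟩ := aux_dini f (fun i => clip_continuous (hf i)) hanti hlim
      (isCompact_closedBall (0 : EuclideanSpace ℝ (Fin n)) r) (half_pos hε)
    -- the dominating function
    obtain ⟨c, hcdef⟩ : ∃ c : ℝ, c = 2 * C / r := ⟨_, rfl⟩
    have hc0 : 0 < c := by rw [hcdef]; positivity
    obtain ⟨g, hgdef⟩ : ∃ g : (EuclideanSpace ℝ (Fin n)) → ℝ,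
        g = (fun _ => ε / 2) + c • h := ⟨_, rfl⟩
    have hgx : ∀ x, g x = ε / 2 + c * h x := fun x => by
      rw [hgdef]; rfl
    have hgclip : g ∈ CLip (2 * p) n := hgdef ▸ clip_add (clip_const _ _ (ε/2)) (clip_smul hh c)
    -- pointwise bound : f N ≤ g
    have hptwise : ∀ x, f N x ≤ g x := by
      intro x
      have hxnn : (0:ℝ) ≤ ‖x‖ := norm_nonneg x
      have hhxnn : (0:ℝ) ≤ h x := le_trans zero_le_one (hh1 x)
      rw [hgx]
      rcases le_total ‖x‖ r with hxr | hxr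
      · have hx : x ∈ Metric.closedBall (0 : EuclideanSpace ℝ (Fin n)) r := by
          rw [Metric.mem_closedBall, dist_zero_right]; exact hxr
        have h1 : f N x ≤ ε / 2 := le_of_lt (hN x hx)
        have hch : 0 ≤ c * h x := mul_nonneg (le_of_lt hc0) hhxnn
        linarith
      · -- ‖x‖ ≥ r
        have h1 : f N x ≤ f 0 x := hanti x (Nat.zero_le N)
        have h2 : f 0 x ≤ C * (1 + ‖x‖ ^ (2*p-1)) := hgrow x
        have hxe : (0:ℝ) ≤ ‖x‖ ^ (2*p-1) := by positivity
        have hxp : (0:ℝ) ≤ ‖x‖ ^ (2*p) := by positivity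
        have hcomb : ‖x‖ ^ (2*p-1) * ‖x‖ = ‖x‖ ^ (2*p) := by
          rw [← pow_succ]; congr 1; omega
        have hx1 : ‖x‖ ≤ 1 + ‖x‖ ^ (2*p) := by
          have := aux_pow_le_one_add_pow hxnn (a := 1) (b := 2*p) (by omega)
          simpa using this
        have h3 : C * (1 + ‖x‖ ^ (2*p-1)) * r ≤ C * (1 + ‖x‖ ^ (2*p-1)) * ‖x‖ := by
          apply mul_le_mul_of_nonneg_left hxr
          positivity
        have h4 : C * (1 + ‖x‖^(2*p-1)) * ‖x‖ = C * ‖x‖ + C * ‖x‖^(2*p) := by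
          rw [← hcomb]; ring
        have hmul : C * ‖x‖ ≤ C * (1 + ‖x‖^(2*p)) :=
          mul_le_mul_of_nonneg_left hx1 (le_of_lt hC)
        have hCs : (0:ℝ) ≤ C * ‖x‖^(2*p) := mul_nonneg (le_of_lt hC) hxp
        have h5 : C * ‖x‖ + C * ‖x‖^(2*p) ≤ 2 * C * (1 + ‖x‖^(2*p)) := by linarith
        have h6 : f N x * r ≤ 2 * C * h x := by
          have h7 : f N x * r ≤ C * (1 + ‖x‖^(2*p-1)) * r :=
            mul_le_mul_of_nonneg_right (by linarith) (le_of_lt hr0)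
          rw [hhx]
          linarith
        have h8 : f N x ≤ c * h x := by
          rw [hcdef, div_mul_eq_mul_div, le_div_iff₀ hr0]
          linarith
        linarith
    -- compute
    have hΛg : Λ g ≤ ε / 2 + c * L := by
      have hsub := hsubadd (fun _ => ε/2) (clip_const _ _ (ε/2)) (c • h) (clip_smul hh c)
      have hpos := hposhom h hh c (le_of_lt hc0)
      rw [hconstpres (ε/2), hpos, ← hLdef, ← hgdef] at hsub
      exact hsub
    have hΛfN : Λ (f N) ≤ Λ g := hmono g hgclip (f N) (hf2p N) hptwise
    have hcL : c * L ≤ ε / 4 := by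
      rw [hcdef, div_mul_eq_mul_div, div_le_iff₀ hr0]
      linarith [hr3]
    refine ⟨N, ?_⟩
    calc Λ (f N) ≤ Λ g := hΛfN
      _ ≤ ε / 2 + c * L := hΛg
      _ ≤ ε / 2 + ε / 4 := by linarith
      _ < ε := by linarith
  -- conclude tendsto
  refine ⟨hA, ?_⟩
  rw [Metric.tendsto_atTop]
  intro ε hε
  obtain ⟨N, hN⟩ := key ε hε
  refine ⟨N, fun i hi => ?_⟩
  rw [Real.dist_eq, sub_zero, abs_of_nonneg (hΛnn i)]
  exact lt_of_le_of_lt (hA hi) hN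
end

section
/- Let p ≥ 1 be an integer, let Λ : C_{2p,Lip}(ℝ^n) → ℝ be a sublinear expectation, and let P̄ denote the set of all Borel probability measures m on ℝ^n such that every f ∈ C_{2p−1,Lip}(ℝ^n) is m-integrable and ∫_{ℝ^n} f dm ≤ Λ[f]. Then P̄ is tight: for every integer i ≥ 1, sup_{m∈P̄} m({x ∈ ℝ^n : |x| ≥ i+1}) ≤ Λ[f_i], where f_i(x) = min((|x| − i)⁺, 1), and Λ[f_i] ↓ 0 as i → ∞; in particular, for every ε > 0 there is a compact set K ⊆ ℝ^n with m(ℝ^n \ K) ≤ ε for all m ∈ P̄. -/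
open MeasureTheory Filter Topology

/-- The set `P̄` of Borel probability measures dominated by the sublinear expectation `Λ`
on `C_{2p-1,Lip}(ℝ^n)`. -/
def Pbar (n p : ℕ) (Λ : ((EuclideanSpace ℝ (Fin n)) → ℝ) → ℝ) :
    Set (Measure (EuclideanSpace ℝ (Fin n))) :=
  {m | IsProbabilityMeasure m ∧
    ∀ f ∈ CLip (2 * p - 1) n, Integrable f m ∧ ∫ x, f x ∂m ≤ Λ f}

/-- A globally Lipschitz function is in every `CLip q n`. -/
lemma clip_of_lip {n q : ℕ} {f : EuclideanSpace ℝ (Fin n) → ℝ} {K : ℝ} (hK : 0 ≤ K)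
    (h : ∀ x x', |f x - f x'| ≤ K * ‖x - x'‖) : f ∈ CLip q n := by
  refine ⟨K, fun x x' => (h x x').trans ?_⟩
  have ha := pow_nonneg (norm_nonneg x) (q - 1)
  have hb := pow_nonneg (norm_nonneg x') (q - 1)
  have h1 : (1:ℝ) ≤ 1 + ‖x‖ ^ (q - 1) + ‖x'‖ ^ (q - 1) := by linarith
  have h0 : (0:ℝ) ≤ ‖x - x'‖ := norm_nonneg _
  calc K * ‖x - x'‖ = K * 1 * ‖x - x'‖ := by ring
    _ ≤ K * (1 + ‖x‖ ^ (q - 1) + ‖x'‖ ^ (q - 1)) * ‖x - x'‖ :=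
      mul_le_mul_of_nonneg_right (mul_le_mul_of_nonneg_left h1 hK) h0

lemma min_one_lip (u v : ℝ) : |min u 1 - min v 1| ≤ |u - v| := by
  have h1 := le_abs_self (u - v); have h2 := neg_abs_le (u - v)
  rw [abs_le]
  constructor <;> rcases le_total u 1 with h|h <;> rcases le_total v 1 with h'|h' <;>
    simp [min_eq_left, min_eq_right, *] <;> linarith

/-- The truncation function is `1`-Lipschitz. -/
lemma fi_lip (c a b : ℝ) :
    |min (max (a - c) 0) 1 - min (max (b - c) 0) 1| ≤ |a - b| := by
  calc |min (max (a - c) 0) 1 - min (max (b - c) 0) 1|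
      ≤ |max (a - c) 0 - max (b - c) 0| := min_one_lip _ _
    _ ≤ |(a - c) - (b - c)| := abs_max_sub_max_le_abs _ _ _
    _ = |a - b| := by ring_nf

lemma fi_mem (q n : ℕ) (c : ℝ) :
    (fun x : EuclideanSpace ℝ (Fin n) => min (max (‖x‖ - c) 0) 1) ∈ CLip q n := by
  refine clip_of_lip zero_le_one fun x x' => ?_
  rw [one_mul]
  exact (fi_lip c ‖x‖ ‖x'‖).trans (abs_norm_sub_norm_le x x')

lemma norm_mem (q n : ℕ) (a : ℝ) (ha : 0 ≤ a) :
    (a • fun x : EuclideanSpace ℝ (Fin n) => ‖x‖) ∈ CLip q n := by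
  refine clip_of_lip ha fun x x' => ?_
  simp only [Pi.smul_apply, smul_eq_mul, ← mul_sub, abs_mul, abs_of_nonneg ha]
  exact mul_le_mul_of_nonneg_left ((abs_norm_sub_norm_le x x')) ha

lemma const_mem (q n : ℕ) (c : ℝ) :
    (fun _ : EuclideanSpace ℝ (Fin n) => c) ∈ CLip q n := by
  refine clip_of_lip le_rfl fun x x' => ?_
  simp

/-- the family `P̄` of probability measures dominated by a sublinear
expectation is tight. -/
theorem Pbar_tight
    (n p : ℕ) (hp : 1 ≤ p)
    (Λ : ((EuclideanSpace ℝ (Fin n)) → ℝ) → ℝ)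
    (hmono : ∀ f ∈ CLip (2 * p) n, ∀ g ∈ CLip (2 * p) n, (∀ x, g x ≤ f x) → Λ g ≤ Λ f)
    (hconstpres : ∀ c : ℝ, Λ (fun _ => c) = c)
    (hsubadd : ∀ f ∈ CLip (2 * p) n, ∀ g ∈ CLip (2 * p) n, Λ (f + g) ≤ Λ f + Λ g)
    (hposhom : ∀ f ∈ CLip (2 * p) n, ∀ a : ℝ, 0 ≤ a → Λ (a • f) = a * Λ f) :
    (∀ i : ℕ, 1 ≤ i → ∀ m ∈ Pbar n p Λ,
      m {x : EuclideanSpace ℝ (Fin n) | (i : ℝ) + 1 ≤ ‖x‖}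
        ≤ ENNReal.ofReal (Λ (fun x => min (max (‖x‖ - (i : ℝ)) 0) 1))) ∧
    Antitone (fun i : ℕ => Λ (fun x : EuclideanSpace ℝ (Fin n) =>
      min (max (‖x‖ - (i : ℝ)) 0) 1)) ∧
    Tendsto (fun i : ℕ => Λ (fun x : EuclideanSpace ℝ (Fin n) =>
      min (max (‖x‖ - (i : ℝ)) 0) 1)) atTop (𝓝 0) ∧
    (∀ ε : ℝ, 0 < ε → ∃ K : Set (EuclideanSpace ℝ (Fin n)), IsCompact K ∧
      ∀ m ∈ Pbar n p Λ, m Kᶜ ≤ ENNReal.ofReal ε) := by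
  set fi : ℕ → (EuclideanSpace ℝ (Fin n)) → ℝ :=
    fun i x => min (max (‖x‖ - (i : ℝ)) 0) 1 with hfidef
  -- nonnegativity of Λ (fi i)
  have hfinonneg : ∀ i x, 0 ≤ fi i x := fun i x => le_min (le_max_right _ _) zero_le_one
  have hΛnonneg : ∀ i : ℕ, 0 ≤ Λ (fi i) := by
    intro i
    have := hmono (fi i) (fi_mem _ n _) (fun _ => (0:ℝ)) (const_mem _ n 0)
      (fun x => hfinonneg i x)
    rw [hconstpres 0] at this
    exact this
  -- Part 1
  have part1 : ∀ i : ℕ, 1 ≤ i → ∀ m ∈ Pbar n p Λ,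
      m {x : EuclideanSpace ℝ (Fin n) | (i : ℝ) + 1 ≤ ‖x‖}
        ≤ ENNReal.ofReal (Λ (fi i)) := by
    intro i _ m hm
    obtain ⟨hprob, hdom⟩ := hm
    obtain ⟨hint, hle⟩ := hdom (fi i) (fi_mem _ n _)
    set S : Set (EuclideanSpace ℝ (Fin n)) := {x | (i : ℝ) + 1 ≤ ‖x‖} with hSdef
    have hS : MeasurableSet S := measurableSet_le measurable_const continuous_norm.measurable
    have hindint : Integrable (S.indicator (1 : EuclideanSpace ℝ (Fin n) → ℝ)) m := by
      rw [integrable_indicator_iff hS]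
      exact integrableOn_const (measure_ne_top m S)
    have hptple : ∀ x, S.indicator (1 : EuclideanSpace ℝ (Fin n) → ℝ) x ≤ fi i x := by
      intro x
      by_cases hx : x ∈ S
      · rw [Set.indicator_of_mem hx]
        have hx' : (1:ℝ) ≤ ‖x‖ - i := by
          have := hx; simp only [hSdef, Set.mem_setOf_eq] at this; linarith
        simp only [hfidef, Pi.one_apply]
        rw [max_eq_left (by linarith), min_eq_right hx']
      · rw [Set.indicator_of_notMem hx]; exact hfinonneg i x
    have hint1 : ∫ x, S.indicator (1 : EuclideanSpace ℝ (Fin n) → ℝ) x ∂m = (m S).toReal :=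
      integral_indicator_one hS
    have hmle : (m S).toReal ≤ Λ (fi i) := by
      rw [← hint1]
      exact le_trans (integral_mono hindint hint hptple) hle
    calc m S = ENNReal.ofReal ((m S).toReal) := (ENNReal.ofReal_toReal (measure_ne_top m S)).symm
      _ ≤ ENNReal.ofReal (Λ (fi i)) := ENNReal.ofReal_le_ofReal hmle
  -- Part 2
  have part2 : Antitone (fun i : ℕ => Λ (fi i)) := by
    apply antitone_nat_of_succ_le
    intro i
    apply hmono (fi i) (fi_mem _ n _) (fi (i + 1)) (fi_mem _ n _)
    intro x
    apply min_le_min _ le_rfl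
    apply max_le_max _ le_rfl
    push_cast
    linarith
  -- Part 3
  have part3 : Tendsto (fun i : ℕ => Λ (fi i)) atTop (𝓝 0) := by
    set C : ℝ := Λ (fun x : EuclideanSpace ℝ (Fin n) => ‖x‖) with hCdef
    have hbound : ∀ i : ℕ, 1 ≤ i → Λ (fi i) ≤ C / i := by
      intro i hi
      have hipos : (0:ℝ) < i := by exact_mod_cast hi
      have hinv : (0:ℝ) ≤ (i:ℝ)⁻¹ := by positivity
      have hnorm1 : (fun x : EuclideanSpace ℝ (Fin n) => ‖x‖) ∈ CLip (2 * p) n := by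
        have := norm_mem (2 * p) n 1 zero_le_one
        simpa using this
      have hle : Λ (fi i) ≤ Λ ((i:ℝ)⁻¹ • fun x : EuclideanSpace ℝ (Fin n) => ‖x‖) := by
        apply hmono _ (norm_mem _ n _ hinv) _ (fi_mem _ n _)
        intro x
        simp only [Pi.smul_apply, smul_eq_mul]
        rcases le_total ‖x‖ (i:ℝ) with h | h
        · have : max (‖x‖ - (i:ℝ)) 0 = 0 := max_eq_right (by linarith)
          simp only [hfidef, this]
          rw [min_eq_left zero_le_one]
          positivity
        · have h1 : (1:ℝ) ≤ (i:ℝ)⁻¹ * ‖x‖ := by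
            nlinarith [mul_le_mul_of_nonneg_left h hinv, inv_mul_cancel₀ (ne_of_gt hipos)]
          exact le_trans (min_le_right _ _) h1
      rw [hposhom _ hnorm1 _ hinv] at hle
      calc Λ (fi i) ≤ (i:ℝ)⁻¹ * C := hle
        _ = C / i := by ring
    apply tendsto_of_tendsto_of_tendsto_of_le_of_le' tendsto_const_nhds
      (tendsto_const_div_atTop_nhds_zero_nat C)
    · exact Eventually.of_forall fun i => hΛnonneg i
    · filter_upwards [eventually_ge_atTop 1] with i hi
      exact hbound i hi
  refine ⟨part1, part2, part3, ?_⟩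
  -- Part 4
  intro ε hε
  have := (part3.eventually (eventually_lt_nhds hε)).and (eventually_ge_atTop 1)
  obtain ⟨i, hiε, hi1⟩ := this.exists
  refine ⟨Metric.closedBall 0 ((i:ℝ) + 1), isCompact_closedBall _ _, ?_⟩
  intro m hm
  have hsub : (Metric.closedBall (0 : EuclideanSpace ℝ (Fin n)) ((i:ℝ) + 1))ᶜ ⊆
      {x : EuclideanSpace ℝ (Fin n) | (i : ℝ) + 1 ≤ ‖x‖} := by
    intro x hx
    simp only [Set.mem_compl_iff, Metric.mem_closedBall, dist_zero_right, not_le] at hx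
    exact le_of_lt hx
  calc m (Metric.closedBall (0 : EuclideanSpace ℝ (Fin n)) ((i:ℝ) + 1))ᶜ
      ≤ m {x : EuclideanSpace ℝ (Fin n) | (i : ℝ) + 1 ≤ ‖x‖} := measure_mono hsub
    _ ≤ ENNReal.ofReal (Λ (fi i)) := part1 i hi1 m hm
    _ ≤ ENNReal.ofReal ε := ENNReal.ofReal_le_ofReal (le_of_lt hiε)
end

section
/- Let 0 < σ < 1, g₁(x) = x⁴ − 3/4 and g₂(x) = x⁴ + 3(σ² − 1)x² + (3/4)σ⁴ − (3/2)σ². Then ∫_ℝ max(g₁, g₂)(z) γ_{1/2}(dz) = 3 ∫_{{|z| ≤ √(1−σ²)/2}} ((1/4)(1 − σ²)² − (1 − σ²)z²) γ_{1/2}(dz). -/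
open MeasureTheory ProbabilityTheory


open MeasureTheory ProbabilityTheory Real Set Filter

lemma integrable_pow_exp (n : ℕ) : Integrable fun x : ℝ => x ^ n * rexp (-x ^ 2) := by
  have h := integrable_rpow_mul_exp_neg_mul_sq (b := 1) one_pos
    (s := (n : ℝ)) (lt_of_lt_of_le neg_one_lt_zero (Nat.cast_nonneg n))
  simpa [Real.rpow_natCast] using h

lemma integrable_exp_sq : Integrable fun x : ℝ => rexp (-x ^ 2) := by
  simpa using integrable_exp_neg_mul_sq (b := 1) one_pos

lemma intIoi_exp : ∫ x in Ioi (0:ℝ), rexp (-x ^ 2) = Real.sqrt π / 2 := by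
  simpa using integral_gaussian_Ioi 1

lemma tendsto_pow_exp_sq (n : ℕ) :
    Tendsto (fun x : ℝ => x ^ n * rexp (-x ^ 2)) atTop (nhds 0) := by
  have h := rpow_mul_exp_neg_mul_sq_isLittleO_exp_neg (b := 1) one_pos (n : ℝ)
  have h2 : Tendsto (fun x : ℝ => rexp (-(1 / 2) * x)) atTop (nhds 0) := by
    apply Real.tendsto_exp_atBot.comp
    exact (tendsto_const_mul_atBot_of_neg (by norm_num)).mpr tendsto_id
  have := h.isBigO.trans_tendsto h2
  simpa [Real.rpow_natCast] using this

lemma intIoi_sq : ∫ x in Ioi (0:ℝ), x ^ 2 * rexp (-x ^ 2) = Real.sqrt π / 4 := by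
  have hD : ∀ x ∈ Ici (0:ℝ), HasDerivAt (fun x : ℝ => x * rexp (-x ^ 2))
      (rexp (-x ^ 2) - 2 * (x ^ 2 * rexp (-x ^ 2))) x := by
    intro x _
    have h1 : HasDerivAt (fun x : ℝ => -x ^ 2) (-(2 * x)) x := by
      simpa using ((hasDerivAt_pow 2 x).fun_neg)
    have h2 := (h1.exp)
    have := (hasDerivAt_id x).fun_mul h2
    refine this.congr_deriv ?_
    simp only [id_eq]
    ring
  have hint : IntegrableOn (fun x : ℝ => rexp (-x ^ 2) - 2 * (x ^ 2 * rexp (-x ^ 2)))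
      (Ioi 0) :=
    (integrable_exp_sq.sub ((integrable_pow_exp 2).const_mul 2)).integrableOn
  have key := integral_Ioi_of_hasDerivAt_of_tendsto' hD hint
    (by simpa using tendsto_pow_exp_sq 1)
  simp only [zero_mul, mul_zero] at key
  rw [integral_sub integrable_exp_sq.integrableOn
    (((integrable_pow_exp 2).const_mul 2).integrableOn),
    integral_const_mul, intIoi_exp] at key
  linarith

lemma intIoi_q : ∫ x in Ioi (0:ℝ), x ^ 4 * rexp (-x ^ 2) = 3 * Real.sqrt π / 8 := by
  have hD : ∀ x ∈ Ici (0:ℝ), HasDerivAt (fun x : ℝ => x ^ 3 * rexp (-x ^ 2))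
      (3 * (x ^ 2 * rexp (-x ^ 2)) - 2 * (x ^ 4 * rexp (-x ^ 2))) x := by
    intro x _
    have h1 : HasDerivAt (fun x : ℝ => -x ^ 2) (-(2 * x)) x := by
      simpa using ((hasDerivAt_pow 2 x).fun_neg)
    have := (hasDerivAt_pow 3 x).fun_mul h1.exp
    refine this.congr_deriv ?_
    ring
  have hint : IntegrableOn
      (fun x : ℝ => 3 * (x ^ 2 * rexp (-x ^ 2)) - 2 * (x ^ 4 * rexp (-x ^ 2))) (Ioi 0) :=
    (((integrable_pow_exp 2).const_mul 3).sub ((integrable_pow_exp 4).const_mul 2)).integrableOn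
  have key := integral_Ioi_of_hasDerivAt_of_tendsto' hD hint
    (by simpa using tendsto_pow_exp_sq 3)
  simp only [mul_zero, zero_mul, zero_pow three_ne_zero] at key
  rw [integral_sub (((integrable_pow_exp 2).const_mul 3).integrableOn)
    (((integrable_pow_exp 4).const_mul 2).integrableOn),
    integral_const_mul, integral_const_mul, intIoi_sq] at key
  linarith

lemma int_q : ∫ x : ℝ, x ^ 4 * rexp (-x ^ 2) = 3 * Real.sqrt π / 4 := by
  have := integral_comp_abs (f := fun x : ℝ => x ^ 4 * rexp (-x ^ 2))
  rw [intIoi_q] at this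
  have h2 : ∀ x : ℝ, |x| ^ 4 * rexp (-|x| ^ 2) = x ^ 4 * rexp (-x ^ 2) := by
    intro x; rw [sq_abs, pow_abs, abs_of_nonneg (by positivity : (0:ℝ) ≤ x ^ 4)]
  simp only [h2] at this
  rw [this]; ring
open scoped NNReal ENNReal

lemma pdf_half (x : ℝ) :
    gaussianPDFReal 0 (1 / 2) x = (Real.sqrt π)⁻¹ * rexp (-x ^ 2) := by
  rw [gaussianPDFReal]
  have h : ((1 / 2 : ℝ≥0) : ℝ) = 1 / 2 := by norm_num
  rw [h]
  norm_num
  ring_nf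
  rw [mul_comm, ← mul_assoc, inv_mul_cancel₀ (by positivity : Real.sqrt 2 ≠ 0), one_mul]

lemma gauss_half_eq :
    gaussianReal 0 (1 / 2) = volume.withDensity
      (fun x => ((Real.toNNReal ((Real.sqrt π)⁻¹ * rexp (-x ^ 2)) : ℝ≥0) : ℝ≥0∞)) := by
  rw [gaussianReal_of_var_ne_zero _ (by norm_num)]
  congr 1
  ext x
  rw [gaussianPDF, pdf_half, ENNReal.ofReal]

lemma pdf_meas : Measurable fun x : ℝ => Real.toNNReal ((Real.sqrt π)⁻¹ * rexp (-x ^ 2)) := by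
  apply measurable_real_toNNReal.comp
  fun_prop

lemma integral_gauss_half (f : ℝ → ℝ) :
    ∫ x, f x ∂(gaussianReal 0 (1 / 2))
      = (Real.sqrt π)⁻¹ * ∫ x, f x * rexp (-x ^ 2) := by
  rw [gauss_half_eq, integral_withDensity_eq_integral_smul pdf_meas]
  rw [← integral_const_mul]
  congr 1; ext x
  rw [NNReal.smul_def, Real.coe_toNNReal _ (by positivity), smul_eq_mul]
  ring

lemma integrable_gauss_half (f : ℝ → ℝ)
    (h : Integrable fun x => f x * rexp (-x ^ 2)) :
    Integrable f (gaussianReal 0 (1 / 2)) := by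
  rw [gauss_half_eq, integrable_withDensity_iff (pdf_meas.coe_nnreal_ennreal)
    (Eventually.of_forall fun x => ENNReal.coe_lt_top)]
  apply (h.const_mul ((Real.sqrt π)⁻¹)).congr (Eventually.of_forall fun x => ?_)
  rw [ENNReal.coe_toReal, Real.coe_toNNReal _ (by positivity)]
  ring

lemma integrable_pow_gauss (n : ℕ) :
    Integrable (fun x : ℝ => x ^ n) (gaussianReal 0 (1 / 2)) := by
  exact integrable_gauss_half _ (integrable_pow_exp n)

lemma integral_pow4_gauss : ∫ x, x ^ 4 ∂(gaussianReal 0 (1 / 2)) = 3 / 4 := by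
  rw [integral_gauss_half, int_q]
  have h : Real.sqrt π ≠ 0 := by positivity
  field_simp

/-- for `0 < σ < 1`, with `g₁(x) = x⁴ − 3/4` and
`g₂(x) = x⁴ + 3(σ² − 1)x² + (3/4)σ⁴ − (3/2)σ²`,
`∫ max(g₁, g₂) dγ_{1/2} = 3 ∫_{|z| ≤ √(1−σ²)/2} ((1/4)(1−σ²)² − (1−σ²)z²) dγ_{1/2}`. -/
theorem integral_max_quartic_gaussian (σ : ℝ) (hσ0 : 0 < σ) (hσ1 : σ < 1)
    (g₁ g₂ : ℝ → ℝ)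
    (hg₁ : ∀ x, g₁ x = x ^ 4 - 3 / 4)
    (hg₂ : ∀ x, g₂ x = x ^ 4 + 3 * (σ ^ 2 - 1) * x ^ 2 + (3 / 4) * σ ^ 4 - (3 / 2) * σ ^ 2) :
    ∫ z, max (g₁ z) (g₂ z) ∂(gaussianReal 0 (1 / 2))
      = 3 * ∫ z in {z : ℝ | |z| ≤ Real.sqrt (1 - σ ^ 2) / 2},
          ((1 / 4) * (1 - σ ^ 2) ^ 2 - (1 - σ ^ 2) * z ^ 2) ∂(gaussianReal 0 (1 / 2)) := by
  set a : ℝ := 1 - σ ^ 2 with ha_def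
  have ha : 0 < a := by nlinarith
  set S : Set ℝ := {z : ℝ | |z| ≤ Real.sqrt (1 - σ ^ 2) / 2} with hS_def
  have hSmeas : MeasurableSet S := measurableSet_le (measurable_id.abs) measurable_const
  set h : ℝ → ℝ := fun z => 3 * ((1 / 4) * a ^ 2 - a * z ^ 2) with hh_def
  have hmem : ∀ z : ℝ, z ∈ S ↔ z ^ 2 ≤ a / 4 := by
    intro z
    rw [hS_def, mem_setOf_eq, ← ha_def]
    constructor
    · intro hz
      have h2 : z ^ 2 ≤ (Real.sqrt a / 2) ^ 2 := by
        rw [← sq_abs]; exact pow_le_pow_left₀ (abs_nonneg z) hz 2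
      rw [div_pow, sq_sqrt ha.le] at h2
      norm_num at h2
      exact h2
    · intro hz
      rw [← Real.sqrt_sq_eq_abs]
      have h4 : Real.sqrt (a / 4) = Real.sqrt a / 2 := by
        rw [Real.sqrt_div ha.le, show Real.sqrt 4 = 2 by
          rw [show (4:ℝ) = 2 ^ 2 by norm_num, Real.sqrt_sq (by norm_num : (0:ℝ) ≤ 2)]]
      rw [← h4]
      exact Real.sqrt_le_sqrt hz
  have hpt : ∀ z : ℝ, max (g₁ z) (g₂ z) = g₁ z + S.indicator h z := by
    intro z
    have hdiff : g₂ z - g₁ z = 3 * ((1 / 4) * a ^ 2 - a * z ^ 2) := by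
      rw [hg₁, hg₂, ha_def]; ring
    by_cases hz : z ∈ S
    · rw [Set.indicator_of_mem hz]
      have hle : g₁ z ≤ g₂ z := by nlinarith [(hmem z).mp hz, ha, hdiff]
      rw [max_eq_right hle]
      have : h z = 3 * ((1 / 4) * a ^ 2 - a * z ^ 2) := rfl
      rw [this]
      linarith [hdiff]
    · rw [Set.indicator_of_notMem hz]
      have hz2 : a / 4 < z ^ 2 := lt_of_not_ge (fun hc => hz ((hmem z).mpr hc))
      have : g₂ z ≤ g₁ z := by nlinarith [hdiff, ha]
      rw [max_eq_left this, add_zero]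
  have Ix4 : Integrable (fun z : ℝ => z ^ 4) (gaussianReal 0 (1 / 2)) := integrable_pow_gauss 4
  have Ix2 : Integrable (fun z : ℝ => z ^ 2) (gaussianReal 0 (1 / 2)) := integrable_pow_gauss 2
  have Ig1 : Integrable g₁ (gaussianReal 0 (1 / 2)) := by
    have : g₁ = fun z => z ^ 4 - 3 / 4 := funext hg₁
    rw [this]
    exact Ix4.sub (integrable_const _)
  have Ih : Integrable h (gaussianReal 0 (1 / 2)) := by
    have : h = fun z => 3 * ((1 / 4) * a ^ 2 - a * z ^ 2) := rfl
    rw [this]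
    exact (((integrable_const _).sub (Ix2.const_mul a)).const_mul 3)
  have Iind : Integrable (S.indicator h) (gaussianReal 0 (1 / 2)) := Ih.indicator hSmeas
  calc ∫ z, max (g₁ z) (g₂ z) ∂(gaussianReal 0 (1 / 2))
      = ∫ z, (g₁ z + S.indicator h z) ∂(gaussianReal 0 (1 / 2)) := by
        congr 1; funext z; exact hpt z
    _ = (∫ z, g₁ z ∂(gaussianReal 0 (1 / 2)))
          + ∫ z, S.indicator h z ∂(gaussianReal 0 (1 / 2)) := integral_add Ig1 Iind
    _ = 0 + ∫ z in S, h z ∂(gaussianReal 0 (1 / 2)) := by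
        rw [integral_indicator hSmeas]
        congr 1
        have : ∫ z, g₁ z ∂(gaussianReal 0 (1 / 2))
            = (∫ z, z ^ 4 ∂(gaussianReal 0 (1 / 2)))
              - ∫ _, (3 / 4 : ℝ) ∂(gaussianReal 0 (1 / 2)) := by
          rw [← integral_sub Ix4 (integrable_const _)]
          congr 1; funext z; rw [hg₁]
        rw [this, integral_pow4_gauss, integral_const]
        simp
    _ = 3 * ∫ z in S, ((1 / 4) * (1 - σ ^ 2) ^ 2 - (1 - σ ^ 2) * z ^ 2)
          ∂(gaussianReal 0 (1 / 2)) := by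
        rw [zero_add, ← integral_const_mul]
end

section
/- For every σ with 0 < σ ≤ 1, ∫_ℝ (z⁴ − 3z²) γ_{σ²}(dz) = 3σ⁴ − 3σ² ≤ 0. In particular, combined with the strict inequality ∫ max(g₁, g₂) dγ_{1/2} > 0, this shows that the iterated supremum over two-step Gaussian averages of z ↦ z⁴ − 3z² is strictly larger than the one-step supremum sup_{σ̲ ≤ σ ≤ 1} ∫ (z⁴ − 3z²) γ_{σ²}(dz) when 0 < σ̲ < 1. -/
open MeasureTheory ProbabilityTheory

open Real
open scoped NNReal ENNReal


lemma integrable_pow_mul_exp {b : ℝ} (hb : 0 < b) (n : ℕ) :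
    Integrable (fun x : ℝ => x ^ n * Real.exp (-b * x ^ 2)) := by
  have hG : Integrable (fun x : ℝ => x ^ (n : ℝ) * Real.exp (-b * x ^ 2)) :=
    integrable_rpow_mul_exp_neg_mul_sq hb
      (by exact_mod_cast lt_of_lt_of_le neg_one_lt_zero (Nat.cast_nonneg n))
  simpa [Real.rpow_natCast] using hG

lemma moment_step {b : ℝ} (hb : 0 < b) (k : ℕ) :
    ∫ x : ℝ, x ^ (k + 2) * Real.exp (-b * x ^ 2)
      = ((k + 1 : ℝ) / (2 * b)) * ∫ x : ℝ, x ^ k * Real.exp (-b * x ^ 2) := by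
  have hu : ∀ x : ℝ, HasDerivAt (fun y : ℝ => y ^ (k + 1))
      (((k : ℝ) + 1) * x ^ k) x := by
    intro x
    simpa using hasDerivAt_pow (k + 1) x
  have hv : ∀ x : ℝ, HasDerivAt (fun y : ℝ => Real.exp (-b * y ^ 2))
      (-2 * b * x * Real.exp (-b * x ^ 2)) x := by
    intro x
    have h1 : HasDerivAt (fun y : ℝ => -b * y ^ 2) (-b * (2 * x)) x := by
      simpa using ((hasDerivAt_pow 2 x).const_mul (-b))
    simpa [mul_comm, mul_assoc, mul_left_comm] using h1.exp
  have key := integral_mul_deriv_eq_deriv_mul_of_integrable (fun x _ => hu x) (fun x _ => hv x)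
    (by
      have := ((integrable_pow_mul_exp hb (k + 2)).const_mul (-2 * b))
      refine this.congr ?_
      filter_upwards with x
      show -2 * b * (x ^ (k + 2) * Real.exp (-b * x ^ 2))
        = x ^ (k + 1) * (-2 * b * x * Real.exp (-b * x ^ 2))
      ring)
    (by
      have := ((integrable_pow_mul_exp hb k).const_mul ((k : ℝ) + 1))
      refine this.congr ?_
      filter_upwards with x
      show ((k : ℝ) + 1) * (x ^ k * Real.exp (-b * x ^ 2))
        = ((k : ℝ) + 1) * x ^ k * Real.exp (-b * x ^ 2)
      ring)
    (integrable_pow_mul_exp hb (k + 1))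
  -- key : ∫ x, x^(k+1) * (-2*b*x*exp) = - ∫ x, ((k+1)*x^k) * exp
  have h1 : ∫ x : ℝ, x ^ (k + 1) * (-2 * b * x * Real.exp (-b * x ^ 2))
      = (-2 * b) * ∫ x : ℝ, x ^ (k + 2) * Real.exp (-b * x ^ 2) := by
    rw [← integral_const_mul]
    congr 1; ext x; ring
  have h2 : ∫ x : ℝ, ((k : ℝ) + 1) * x ^ k * Real.exp (-b * x ^ 2)
      = ((k : ℝ) + 1) * ∫ x : ℝ, x ^ k * Real.exp (-b * x ^ 2) := by
    rw [← integral_const_mul]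
    congr 1; ext x; ring
  rw [h1, h2] at key
  have hb' : (-2 : ℝ) * b ≠ 0 := by positivity
  field_simp at key ⊢
  linarith [key]

lemma moment_two {b : ℝ} (hb : 0 < b) :
    ∫ x : ℝ, x ^ 2 * Real.exp (-b * x ^ 2) = Real.sqrt (π / b) / (2 * b) := by
  have h := moment_step hb 0
  simp only [pow_zero, one_mul, Nat.cast_zero, zero_add] at h
  rw [h, integral_gaussian]
  ring

lemma moment_four {b : ℝ} (hb : 0 < b) :
    ∫ x : ℝ, x ^ 4 * Real.exp (-b * x ^ 2) = 3 * Real.sqrt (π / b) / (4 * b ^ 2) := by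
  have h := moment_step hb 2
  norm_num [neg_mul] at h
  simp_rw [neg_mul]
  rw [h]
  simp_rw [← neg_mul]
  rw [moment_two hb]
  field_simp
  ring

-- transfer to the gaussianReal measure
lemma integral_gaussianReal_eq {v : ℝ≥0} (hv : v ≠ 0) (g : ℝ → ℝ) :
    ∫ x, g x ∂(gaussianReal 0 v) = ∫ x, gaussianPDFReal 0 v x * g x := by
  rw [gaussianReal_of_var_ne_zero _ hv]
  have hd : (gaussianPDF 0 v) = fun x => ((gaussianPDFReal 0 v x).toNNReal : ℝ≥0∞) := by
    ext x; rfl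
  rw [hd, integral_withDensity_eq_integral_smul
    ((measurable_gaussianPDFReal 0 v).real_toNNReal) g]
  congr 1
  ext x
  simp [NNReal.smul_def, Real.coe_toNNReal _ (gaussianPDFReal_nonneg 0 v x)]

lemma integrable_gaussianReal_iff {v : ℝ≥0} (hv : v ≠ 0) (g : ℝ → ℝ) :
    Integrable g (gaussianReal 0 v)
      ↔ Integrable (fun x => gaussianPDFReal 0 v x * g x) := by
  rw [gaussianReal_of_var_ne_zero _ hv]
  have hd : (gaussianPDF 0 v) = fun x => ((gaussianPDFReal 0 v x).toNNReal : ℝ≥0∞) := by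
    ext x; rfl
  rw [hd, integrable_withDensity_iff_integrable_smul
    ((measurable_gaussianPDFReal 0 v).real_toNNReal)]
  apply integrable_congr
  filter_upwards with x
  simp [NNReal.smul_def, Real.coe_toNNReal _ (gaussianPDFReal_nonneg 0 v x)]

lemma gaussianPDFReal_zero_mean (v : ℝ≥0) (x : ℝ) :
    gaussianPDFReal 0 v x
      = (Real.sqrt (2 * π * v))⁻¹ * Real.exp (-(2 * (v : ℝ))⁻¹ * x ^ 2) := by
  rw [gaussianPDFReal]
  congr 1
  rw [sub_zero]
  congr 1
  ring

lemma integrable_pow_gaussianReal {v : ℝ≥0} (hv : v ≠ 0) (n : ℕ) :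
    Integrable (fun x : ℝ => x ^ n) (gaussianReal 0 v) := by
  rw [integrable_gaussianReal_iff hv]
  have hb : (0 : ℝ) < (2 * (v : ℝ))⁻¹ := by
    have : (0 : ℝ) < v := by exact_mod_cast hv.bot_lt
    positivity
  have := ((integrable_pow_mul_exp hb n).const_mul (Real.sqrt (2 * π * v))⁻¹)
  refine this.congr ?_
  filter_upwards with x
  rw [gaussianPDFReal_zero_mean]
  ring

lemma integral_pow_gaussianReal {v : ℝ≥0} (hv : v ≠ 0) (n : ℕ) :
    ∫ x, x ^ n ∂(gaussianReal 0 v)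
      = (Real.sqrt (2 * π * v))⁻¹
        * ∫ x : ℝ, x ^ n * Real.exp (-(2 * (v : ℝ))⁻¹ * x ^ 2) := by
  rw [integral_gaussianReal_eq hv, ← integral_const_mul]
  congr 1
  ext x
  rw [gaussianPDFReal_zero_mean]
  ring

lemma sq_gaussianReal {v : ℝ≥0} (hv : v ≠ 0) :
    ∫ x, x ^ 2 ∂(gaussianReal 0 v) = v := by
  have hv' : (0 : ℝ) < v := by exact_mod_cast hv.bot_lt
  have hb : (0 : ℝ) < (2 * (v : ℝ))⁻¹ := by positivity
  rw [integral_pow_gaussianReal hv, moment_two hb]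
  have h1 : π / ((2 * (v : ℝ))⁻¹) = 2 * π * v := by field_simp
  rw [h1]
  have h2 : Real.sqrt (2 * π * v) ≠ 0 := by
    refine ne_of_gt (Real.sqrt_pos.mpr ?_)
    positivity
  field_simp

lemma pow_four_gaussianReal {v : ℝ≥0} (hv : v ≠ 0) :
    ∫ x, x ^ 4 ∂(gaussianReal 0 v) = 3 * (v : ℝ) ^ 2 := by
  have hv' : (0 : ℝ) < v := by exact_mod_cast hv.bot_lt
  have hb : (0 : ℝ) < (2 * (v : ℝ))⁻¹ := by positivity
  rw [integral_pow_gaussianReal hv, moment_four hb]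
  have h1 : π / ((2 * (v : ℝ))⁻¹) = 2 * π * v := by field_simp
  rw [h1]
  have h2 : Real.sqrt (2 * π * v) ≠ 0 := by
    refine ne_of_gt (Real.sqrt_pos.mpr ?_)
    positivity
  field_simp
  ring

lemma part1 (σ : ℝ) (h0 : 0 < σ) (h1 : σ ≤ 1) :
    (∫ z, (z ^ 4 - 3 * z ^ 2) ∂(gaussianReal 0 (Real.toNNReal (σ ^ 2)))
        = 3 * σ ^ 4 - 3 * σ ^ 2) ∧ 3 * σ ^ 4 - 3 * σ ^ 2 ≤ 0 := by
  set v : ℝ≥0 := Real.toNNReal (σ ^ 2) with hvdef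
  have hvc : (v : ℝ) = σ ^ 2 := Real.coe_toNNReal _ (sq_nonneg σ)
  have hv : v ≠ 0 := by
    intro h
    have := hvc
    rw [h] at this
    simp at this
    nlinarith
  constructor
  · have h4 := integrable_pow_gaussianReal hv 4
    have h2 := (integrable_pow_gaussianReal hv 2).const_mul (3 : ℝ)
    rw [integral_sub h4 h2, integral_const_mul, sq_gaussianReal hv,
      pow_four_gaussianReal hv, hvc]
    ring
  · have hs : σ ^ 2 ≤ 1 := by nlinarith
    nlinarith [sq_nonneg σ]

/-- for `0 < σ ≤ 1`, `∫ (z⁴ − 3z²) γ_{σ²}(dz) = 3σ⁴ − 3σ² ≤ 0`; combined with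
the strict positivity of `∫ max(g₁, g₂) dγ_{1/2}`, the iterated two-step Gaussian supremum of
`z ↦ z⁴ − 3z²` strictly exceeds the one-step supremum `sup_{σ̲ ≤ σ ≤ 1} ∫ (z⁴ − 3z²) γ_{σ²}(dz)`
whenever `0 < σ̲ < 1`. -/
theorem one_step_gaussian_sup_lt_two_step
    : (∀ σ : ℝ, 0 < σ → σ ≤ 1 →
        (∫ z, (z ^ 4 - 3 * z ^ 2) ∂(gaussianReal 0 (Real.toNNReal (σ ^ 2)))
            = 3 * σ ^ 4 - 3 * σ ^ 2) ∧ 3 * σ ^ 4 - 3 * σ ^ 2 ≤ 0) ∧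
      (∀ σl : ℝ, 0 < σl → σl < 1 →
        (⨆ σ : Set.Icc σl 1,
            ∫ z, (z ^ 4 - 3 * z ^ 2) ∂(gaussianReal 0 (Real.toNNReal ((σ : ℝ) ^ 2))))
          < ∫ z, max ((z : ℝ) ^ 4 - 3 / 4)
              (z ^ 4 + 3 * (σl ^ 2 - 1) * z ^ 2 + (3 / 4) * σl ^ 4 - (3 / 2) * σl ^ 2)
              ∂(gaussianReal 0 (1 / 2))) := by
  refine ⟨part1, ?_⟩
  intro σl h0 h1
  haveI : Nonempty (Set.Icc σl 1) := ⟨⟨σl, le_refl _, h1.le⟩⟩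
  have hv : (1 / 2 : ℝ≥0) ≠ 0 := by norm_num
  have hvc : ((1 / 2 : ℝ≥0) : ℝ) = 1 / 2 := by norm_num
  set γ := gaussianReal 0 (1 / 2 : ℝ≥0) with hγ
  haveI : IsProbabilityMeasure γ :=
    inferInstanceAs (IsProbabilityMeasure (gaussianReal 0 (1 / 2 : ℝ≥0)))
  set g₁ : ℝ → ℝ := fun z => z ^ 4 - 3 / 4 with hg₁
  set g₂ : ℝ → ℝ := fun z =>
    z ^ 4 + 3 * (σl ^ 2 - 1) * z ^ 2 + (3 / 4) * σl ^ 4 - (3 / 2) * σl ^ 2 with hg₂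
  -- integrability
  have I4 : Integrable (fun z : ℝ => z ^ 4) γ := integrable_pow_gaussianReal hv 4
  have I2 : Integrable (fun z : ℝ => z ^ 2) γ := integrable_pow_gaussianReal hv 2
  have Ic : ∀ c : ℝ, Integrable (fun _ : ℝ => c) γ := fun c => integrable_const c
  have Ig₁ : Integrable g₁ γ := I4.sub (Ic (3 / 4))
  have Ig₂ : Integrable g₂ γ := by
    have : g₂ = fun z => (z ^ 4 + 3 * (σl ^ 2 - 1) * z ^ 2)
        + ((3 / 4) * σl ^ 4 - (3 / 2) * σl ^ 2) := by
      ext z; simp [hg₂]; ring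
    rw [this]
    exact (I4.add (I2.const_mul _)).add (Ic _)
  have IM : Integrable (fun z => max (g₁ z) (g₂ z)) γ := Ig₁.sup Ig₂
  -- ∫ g₁ = 0
  have hint_g₁ : ∫ z, g₁ z ∂γ = 0 := by
    rw [hg₁]
    rw [integral_sub I4 (Ic (3 / 4)), pow_four_gaussianReal hv, integral_const]
    simp [hvc]
    norm_num
  -- the nonneg difference
  set h : ℝ → ℝ := fun z => max (g₁ z) (g₂ z) - g₁ z with hh
  have hnn : 0 ≤ h := fun z => by simp [hh, le_max_left]
  have Ih : Integrable h γ := IM.sub Ig₁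
  have hc₁ : Continuous g₁ := (continuous_pow 4).sub continuous_const
  have hc₂ : Continuous g₂ := by
    rw [hg₂]
    exact (((continuous_pow 4).add (continuous_const.mul (continuous_pow 2))).add
      continuous_const).sub continuous_const
  have hcont : Continuous h := (hc₁.max hc₂).sub hc₁
  have h0pos : 0 < h 0 := by
    have : g₂ 0 - g₁ 0 = (3 / 4) * (σl ^ 2 - 1) ^ 2 := by simp [hg₁, hg₂]; ring
    have hne : σl ^ 2 - 1 ≠ 0 := by nlinarith
    have hpos2 : 0 < g₂ 0 - g₁ 0 := by rw [this]; positivity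
    have hgt : g₁ 0 < g₂ 0 := by linarith
    simp only [hh]
    rw [max_eq_right hgt.le]
    linarith
  have hsupp : 0 < γ (Function.support h) := by
    by_contra hle
    push_neg at hle
    have hz : γ (Function.support h) = 0 := le_antisymm hle zero_le
    have hvol : volume (Function.support h) = 0 :=
      gaussianReal_absolutelyContinuous' 0 hv hz
    have hopen : IsOpen (Function.support h) := hcont.isOpen_support
    have hne : (Function.support h).Nonempty := ⟨0, ne_of_gt h0pos⟩
    exact absurd hvol (ne_of_gt (hopen.measure_pos volume hne))
  have hpos : 0 < ∫ z, h z ∂γ :=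
    (integral_pos_iff_support_of_nonneg hnn Ih).mpr hsupp
  have hint_h : ∫ z, h z ∂γ = (∫ z, max (g₁ z) (g₂ z) ∂γ) - ∫ z, g₁ z ∂γ :=
    integral_sub IM Ig₁
  have hMpos : 0 < ∫ z, max (g₁ z) (g₂ z) ∂γ := by
    rw [hint_h, hint_g₁, sub_zero] at hpos
    exact hpos
  refine lt_of_le_of_lt (ciSup_le fun σ => ?_) hMpos
  have hσ0 : 0 < (σ : ℝ) := lt_of_lt_of_le h0 σ.2.1
  have hσ1 : (σ : ℝ) ≤ 1 := σ.2.2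
  obtain ⟨heq, hle⟩ := part1 σ hσ0 hσ1
  rw [heq]
  exact hle
end
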